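/- With R(τ) = (1/(4·√(2π)))·e^{−τ/4}·(1 − e^{−τ/2})^{-3/2} for τ > 0, one has ∫_0^∞ τ·R(τ) dτ = √(2π). -/

import Mathlib

/-!
With `w = exp (-τ/4)`, so that `1 - exp (-τ/2) = 1 - w²`, the function
`F τ = -(τ w / √(1 - w²) + 4 arcsin w) / √(2π)` is an antiderivative of `τ R(τ)`:
the derivative of `4 arcsin w` cancels the term `w / √(1 - w²)` coming from the product rule, and
the rest combines to `τ w / (4 (1 - w²)^{3/2})`. As `τ → ∞`, `F τ → 0`; as `τ → 0⁺`, the first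
term is `O(√τ)` while `arcsin 1 = π/2`, so `F τ → -2π / √(2π) = -√(2π)`.
-/

open Real MeasureTheory

/-- The Lévy jump rate density of the inverse local time at zero of the
Ornstein–Uhlenbeck process. -/
noncomputable def Rrate (τ : ℝ) : ℝ :=
  (1 / (4 * Real.sqrt (2 * Real.pi))) * Real.exp (-τ/4) * (1 - Real.exp (-τ/2)) ^ (-(3:ℝ)/2)

open Filter Topology

lemma rpow_neg_three_halves {x : ℝ} (hx : 0 ≤ x) : x ^ (-(3:ℝ)/2) = (x * √x)⁻¹ := by
  rw [neg_div, rpow_neg hx, show (3:ℝ)/2 = 1 + 1/2 by norm_num,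
    rpow_add' hx (by norm_num), rpow_one, sqrt_eq_rpow]

lemma mul_exp_neg_le_one_sub_exp_neg (x : ℝ) : x * exp (-x) ≤ 1 - exp (-x) := by
  have h := mul_le_mul_of_nonneg_right (add_one_le_exp x) (exp_pos (-x)).le
  rw [← exp_add, add_neg_cancel, exp_zero] at h
  linarith

lemma exp_neg_div_four_sq (τ : ℝ) : exp (-τ/4) ^ 2 = exp (-τ/2) := by
  rw [← exp_nat_mul]; ring_nf

lemma one_sub_exp_neg_div_two_pos {τ : ℝ} (hτ : 0 < τ) : 0 < 1 - exp (-τ/2) :=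
  sub_pos.2 (exp_lt_one_iff.2 (by linarith))

lemma one_sub_exp_neg_div_two_nonneg {τ : ℝ} (hτ : 0 ≤ τ) : 0 ≤ 1 - exp (-τ/2) :=
  sub_nonneg.2 (exp_le_one_iff.2 (by linarith))

lemma hasDerivAt_exp_neg_div (c τ : ℝ) :
    HasDerivAt (fun x ↦ exp (-x/c)) (-exp (-τ/c) / c) τ := by
  convert ((hasDerivAt_id τ).neg.div_const c).exp using 1 <;> simp [div_eq_mul_inv]

lemma tendsto_exp_neg_div_atTop {c : ℝ} (hc : 0 < c) :
    Tendsto (fun x ↦ exp (-x/c)) atTop (𝓝 0) := by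
  simp only [neg_div]
  exact tendsto_exp_neg_atTop_nhds_zero.comp (tendsto_id.atTop_div_const hc)

lemma mul_exp_neg_div_four_div_sqrt_le {τ : ℝ} (hτ : 0 ≤ τ) :
    τ * exp (-τ/4) / √(1 - exp (-τ/2)) ≤ √(2 * τ) := by
  rcases hτ.eq_or_lt with rfl | hτ
  · simp
  have hu := one_sub_exp_neg_div_two_pos hτ
  have key := mul_exp_neg_le_one_sub_exp_neg (τ/2)
  rw [← neg_div] at key
  rw [le_sqrt (by positivity) (by positivity), div_pow, sq_sqrt hu.le, mul_pow,
    exp_neg_div_four_sq, div_le_iff₀ hu]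
  nlinarith

lemma Rrate_nonneg {τ : ℝ} (hτ : 0 ≤ τ) : 0 ≤ Rrate τ := by
  have := one_sub_exp_neg_div_two_nonneg hτ
  unfold Rrate
  positivity

noncomputable def mulRrateAntideriv (τ : ℝ) : ℝ :=
  -(τ * exp (-τ/4) / √(1 - exp (-τ/2)) + 4 * arcsin (exp (-τ/4))) / √(2 * π)

lemma hasDerivAt_mulRrateAntideriv {τ : ℝ} (hτ : 0 < τ) :
    HasDerivAt mulRrateAntideriv (τ * Rrate τ) τ := by
  have hu := one_sub_exp_neg_div_two_pos hτ
  have hw := hasDerivAt_exp_neg_div 4 τ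
  have hsqrt := ((hasDerivAt_exp_neg_div 2 τ).const_sub 1).sqrt hu.ne'
  have harc := (hasDerivAt_arcsin (x := exp (-τ/4)) (by linarith [exp_pos (-τ/4)])
    (exp_lt_one_iff.2 (by linarith)).ne).comp τ hw
  refine (((((hasDerivAt_id' τ).mul hw).div hsqrt (sqrt_pos.2 hu).ne').add
    (harc.const_mul 4)).neg.div_const (√(2 * π))).congr_deriv ?_
  rw [← exp_neg_div_four_sq] at hu
  have hr := sq_sqrt hu.le
  have hr0 := (sqrt_pos.2 hu).ne'
  rw [Rrate, ← exp_neg_div_four_sq, rpow_neg_three_halves hu.le]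
  simp only [Pi.mul_apply]
  generalize √(1 - exp (-τ/4) ^ 2) = r at hr hr0 ⊢
  generalize exp (-τ/4) = w at hr hr0 ⊢
  rw [← hr]
  field_simp
  linear_combination 4 * τ * w * hr

lemma tendsto_mulRrateAntideriv_atTop : Tendsto mulRrateAntideriv atTop (𝓝 0) := by
  have hpoly : Tendsto (fun τ ↦ τ * exp (-τ/4)) atTop (𝓝 0) := by
    simpa [div_eq_inv_mul, mul_comm] using
      tendsto_rpow_mul_exp_neg_mul_atTop_nhds_zero 1 (1/4) (by norm_num)
  have hsqrt : Tendsto (fun τ ↦ √(1 - exp (-τ/2))) atTop (𝓝 1) := by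
    simpa using ((tendsto_exp_neg_div_atTop two_pos).const_sub 1).sqrt
  have harc : Tendsto (fun τ ↦ arcsin (exp (-τ/4))) atTop (𝓝 0) := by
    simpa [Function.comp_def] using
      (continuous_arcsin.tendsto 0).comp (tendsto_exp_neg_div_atTop four_pos)
  have h := ((hpoly.div hsqrt one_ne_zero).add (harc.const_mul 4)).neg.div_const (√(2 * π))
  rwa [div_one, mul_zero, add_zero, neg_zero, zero_div] at h

lemma continuousWithinAt_mulRrateAntideriv_zero :
    ContinuousWithinAt mulRrateAntideriv (Set.Ici 0) 0 := by
  have hsq : Tendsto (fun τ ↦ τ * exp (-τ/4) / √(1 - exp (-τ/2))) (𝓝[≥] 0) (𝓝 0) := by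
    refine tendsto_of_tendsto_of_tendsto_of_le_of_le' tendsto_const_nhds ?_ ?_ ?_
      (g := fun _ ↦ 0) (h := fun τ ↦ √(2 * τ))
    · simpa using ((by fun_prop : Continuous fun τ : ℝ ↦ √(2 * τ)).tendsto 0).mono_left
        nhdsWithin_le_nhds
    · filter_upwards [self_mem_nhdsWithin] with τ (hτ : 0 ≤ τ)
      have := one_sub_exp_neg_div_two_nonneg hτ
      positivity
    · filter_upwards [self_mem_nhdsWithin] with τ hτ
      exact mul_exp_neg_div_four_div_sqrt_le hτ
  have hg : ContinuousWithinAt (fun τ ↦ τ * exp (-τ/4) / √(1 - exp (-τ/2))) (Set.Ici 0) 0 := by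
    simpa [ContinuousWithinAt] using hsq
  have harc : ContinuousAt (fun τ ↦ arcsin (exp (-τ/4))) 0 := by fun_prop
  exact (hg.add (harc.continuousWithinAt.const_mul 4)).neg.div_const _

lemma mulRrateAntideriv_zero : mulRrateAntideriv 0 = -√(2 * π) := by
  rw [mulRrateAntideriv, neg_zero, zero_div, exp_zero, arcsin_one, zero_mul, zero_div, zero_add,
    neg_div, show 4 * (π / 2) = 2 * π by ring, div_sqrt]

theorem stmt18 :
    (∫ τ in Set.Ioi (0:ℝ), τ * Rrate τ) = Real.sqrt (2 * Real.pi) := by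
  rw [integral_Ioi_of_hasDerivAt_of_nonneg continuousWithinAt_mulRrateAntideriv_zero
      (fun τ hτ ↦ hasDerivAt_mulRrateAntideriv hτ)
      (fun τ hτ ↦ mul_nonneg hτ.le (Rrate_nonneg hτ.le))
      tendsto_mulRrateAntideriv_atTop,
    mulRrateAntideriv_zero, zero_sub, neg_neg]
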